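/- arXiv:1505.00872 — 7 statements merged into one kernel-verified Lean document; each statement's English description precedes it below -/
import Mathlib

section
/- Subcritical invariance: let R = β · Σ_{i=0}^{τ-1} (1 − α·ω(i)) and suppose R ≤ 1. If x : ℤ → ℝ satisfies the epidemic recursion from time 0 and there is a real M ≥ 0 with 0 ≤ x(t) ≤ M for every integer t ≤ 0, then 0 ≤ x(t) ≤ M for every integer t. -/
/-! Each new value `x (t + 1)` is a combination of earlier values with nonnegative weights
`β (1 - α ω i)` summing to `R ≤ 1`, so it stays in `[0, M]` once all earlier values do;
induction on time finishes. -/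

open Finset Set

theorem sum_mul_mem_Icc_of_sum_le_one {ι : Type*} {s : Finset ι} {c y : ι → ℝ} {M : ℝ}
    (hM : 0 ≤ M) (hc : ∀ i ∈ s, 0 ≤ c i) (hc1 : ∑ i ∈ s, c i ≤ 1)
    (hy : ∀ i ∈ s, y i ∈ Icc 0 M) : ∑ i ∈ s, c i * y i ∈ Icc 0 M := by
  refine ⟨sum_nonneg fun i hi => mul_nonneg (hc i hi) (hy i hi).1, ?_⟩
  calc ∑ i ∈ s, c i * y i ≤ ∑ i ∈ s, c i * M :=
        sum_le_sum fun i hi => mul_le_mul_of_nonneg_left (hy i hi).2 (hc i hi)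
    _ = (∑ i ∈ s, c i) * M := (sum_mul ..).symm
    _ ≤ M := mul_le_of_le_one_left hM hc1

theorem mem_Icc_of_delay_recursion {ι : Type*} {s : Finset ι} {c : ι → ℝ} {lag : ι → ℕ}
    {x : ℤ → ℝ} {M : ℝ} (hc : ∀ i ∈ s, 0 ≤ c i) (hc1 : ∑ i ∈ s, c i ≤ 1)
    (hx : ∀ t : ℤ, 0 ≤ t → x (t + 1) = ∑ i ∈ s, c i * x (t - lag i))
    (h0 : ∀ t : ℤ, t ≤ 0 → x t ∈ Icc 0 M) (t : ℤ) : x t ∈ Icc 0 M := by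
  have hM : 0 ≤ M := (h0 0 le_rfl).1.trans (h0 0 le_rfl).2
  have upto : ∀ n : ℕ, ∀ t : ℤ, t ≤ n → x t ∈ Icc 0 M := by
    intro n
    induction n with
    | zero => exact_mod_cast h0
    | succ n ih =>
      intro t ht
      rcases le_or_gt t n with hle | hgt
      · exact ih t hle
      · obtain rfl : t = n + 1 := by push_cast at ht; omega
        rw [hx n n.cast_nonneg]
        exact sum_mul_mem_Icc_of_sum_le_one hM hc hc1 fun i _ => ih _ (by omega)
  exact upto t.toNat t (Int.self_le_toNat t)

theorem epidemic_recursion_subcritical_invariance_general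
    (d τ : ℕ) (β α : ℝ) (hβ : 0 < β)
    (hα1 : α ≤ 1)
    (ω : ℕ → ℝ) (hω : ∀ i, 0 ≤ ω i ∧ ω i ≤ 1)
    (R : ℝ) (hR : R = β * ∑ i ∈ Finset.range τ, (1 - α * ω i)) (hR1 : R ≤ 1)
    (x : ℤ → ℝ)
    (hx : ∀ t : ℤ, 0 ≤ t →
      x (t + 1) = β * ∑ i ∈ Finset.range τ, (1 - α * ω i) * x (t - d - i))
    (M : ℝ)
    (h0 : ∀ t : ℤ, t ≤ 0 → 0 ≤ x t ∧ x t ≤ M) :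
    ∀ t : ℤ, 0 ≤ x t ∧ x t ≤ M := by
  have hc : ∀ i ∈ range τ, 0 ≤ β * (1 - α * ω i) := fun i _ => by
    have hαω : α * ω i ≤ 1 := by nlinarith [hω i]
    exact mul_nonneg hβ.le (by linarith)
  have hc1 : ∑ i ∈ range τ, β * (1 - α * ω i) ≤ 1 := by rwa [← mul_sum, ← hR]
  refine mem_Icc_of_delay_recursion (lag := fun i => d + i) hc hc1 (fun t ht => ?_) h0
  simp only [hx t ht, mul_sum, mul_assoc, Nat.cast_add, sub_sub]

/-- Subcritical invariance: if `R ≤ 1` and the history lies in `[0, M]`,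
then the whole solution lies in `[0, M]`. -/
theorem epidemic_recursion_subcritical_invariance
    (d τ : ℕ) (hτ : 1 ≤ τ) (β α : ℝ) (hβ : 0 < β)
    (hα0 : 0 ≤ α) (hα1 : α ≤ 1)
    (ω : ℕ → ℝ) (hω : ∀ i, 0 ≤ ω i ∧ ω i ≤ 1)
    (R : ℝ) (hR : R = β * ∑ i ∈ Finset.range τ, (1 - α * ω i)) (hR1 : R ≤ 1)
    (x : ℤ → ℝ)
    (hx : ∀ t : ℤ, 0 ≤ t →
      x (t + 1) = β * ∑ i ∈ Finset.range τ, (1 - α * ω i) * x (t - d - i))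
    (M : ℝ) (hM : 0 ≤ M)
    (h0 : ∀ t : ℤ, t ≤ 0 → 0 ≤ x t ∧ x t ≤ M) :
    ∀ t : ℤ, 0 ≤ x t ∧ x t ≤ M :=
  epidemic_recursion_subcritical_invariance_general d τ β α hβ hα1 ω hω R hR hR1 x hx M h0
end

section
/- Geometric decay in the subcritical case: let R = β · Σ_{i=0}^{τ-1} (1 − α·ω(i)) and suppose R < 1. If x : ℤ → ℝ satisfies the epidemic recursion from time 0 and there is a real M ≥ 0 with 0 ≤ x(t) ≤ M for every integer t ≤ 0, then for every natural number k and every integer t with t > k·(d + τ), one has x(t) ≤ R^k · M. -/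
/-!
Write the recursion as `x (t + 1) = ∑ a i * x (t - d - i)` with nonnegative weights `a i` summing
to `R`. A bound `C` on the window `t - d - τ + 1, …, t - d` then gives `x (t + 1) ≤ R * C`. Since
`R ≤ 1`, induction on `t` propagates the initial bound `M` to all times; after `d + τ` further steps
every point of the window already carries the previous bound, so each block of `d + τ` time steps
gains a factor `R`.
-/

open Finset

def IsDelayedLinearRecursion (d τ : ℕ) (a : ℕ → ℝ) (x : ℤ → ℝ) : Prop :=
  ∀ t : ℤ, 0 ≤ t → x (t + 1) = ∑ i ∈ range τ, a i * x (t - d - i)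

namespace IsDelayedLinearRecursion

variable {d τ : ℕ} {a : ℕ → ℝ} {x : ℤ → ℝ}

theorem succ_le (hx : IsDelayedLinearRecursion d τ a x) (ha : ∀ i, 0 ≤ a i) {t : ℤ}
    (ht : 0 ≤ t) {C : ℝ} (hC : ∀ i < τ, x (t - d - i) ≤ C) :
    x (t + 1) ≤ (∑ i ∈ range τ, a i) * C := by
  rw [hx t ht, sum_mul]
  exact sum_le_sum fun i hi => mul_le_mul_of_nonneg_left (hC i (mem_range.1 hi)) (ha i)

theorem le_of_forall_nonpos_le (hx : IsDelayedLinearRecursion d τ a x) (ha : ∀ i, 0 ≤ a i)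
    (ha1 : ∑ i ∈ range τ, a i ≤ 1) {M : ℝ} (hM : 0 ≤ M) (h0 : ∀ t ≤ 0, x t ≤ M) (t : ℤ) :
    x t ≤ M := by
  suffices ∀ n : ℕ, ∀ t : ℤ, t ≤ n → x t ≤ M from this t.toNat t (Int.self_le_toNat t)
  intro n
  induction n with
  | zero => exact fun t ht => h0 t ht
  | succ n ih =>
    intro t ht
    obtain ht | rfl : t ≤ n ∨ t = (n : ℤ) + 1 := by omega
    · exact ih t ht
    · calc x ((n : ℤ) + 1) ≤ (∑ i ∈ range τ, a i) * M :=
            hx.succ_le ha (Int.natCast_nonneg n) fun i _ => ih _ (by omega)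
        _ ≤ M := mul_le_of_le_one_left hM ha1

theorem le_pow_mul (hx : IsDelayedLinearRecursion d τ a x) (ha : ∀ i, 0 ≤ a i)
    (ha1 : ∑ i ∈ range τ, a i ≤ 1) {M : ℝ} (hM : 0 ≤ M) (h0 : ∀ t ≤ 0, x t ≤ M) :
    ∀ k : ℕ, ∀ t : ℤ, (↑(k * (d + τ)) : ℤ) < t → x t ≤ (∑ i ∈ range τ, a i) ^ k * M := by
  intro k
  induction k with
  | zero => simpa using fun t _ => hx.le_of_forall_nonpos_le ha ha1 hM h0 t
  | succ k ih =>
    intro t ht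
    have hk : (0 : ℤ) ≤ ↑(k * (d + τ)) := Int.natCast_nonneg _
    push_cast at ht hk ih
    have hstep := hx.succ_le ha (t := t - 1) (by linarith) fun i hi => ih _ (by linarith)
    rw [sub_add_cancel] at hstep
    exact hstep.trans_eq (by ring)

end IsDelayedLinearRecursion

theorem epidemic_recursion_geometric_decay_general
    (d τ : ℕ) (β α : ℝ) (hβ : 0 < β)
    (hα1 : α ≤ 1)
    (ω : ℕ → ℝ) (hω : ∀ i, 0 ≤ ω i ∧ ω i ≤ 1)
    (R : ℝ) (hR : R = β * ∑ i ∈ Finset.range τ, (1 - α * ω i)) (hR1 : R < 1)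
    (x : ℤ → ℝ)
    (hx : ∀ t : ℤ, 0 ≤ t →
      x (t + 1) = β * ∑ i ∈ Finset.range τ, (1 - α * ω i) * x (t - d - i))
    (M : ℝ)
    (h0 : ∀ t : ℤ, t ≤ 0 → 0 ≤ x t ∧ x t ≤ M) :
    ∀ k : ℕ, ∀ t : ℤ, (↑(k * (d + τ)) : ℤ) < t → x t ≤ R ^ k * M := by
  have hrec : IsDelayedLinearRecursion d τ (fun i => β * (1 - α * ω i)) x := fun t ht => by
    simp only [hx t ht, mul_sum, mul_assoc]
  -- `α * ω i ≤ ω i ≤ 1` since `(1 - α) * ω i ≥ 0`.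
  have hweights : ∀ i, 0 ≤ β * (1 - α * ω i) := fun i =>
    mul_nonneg hβ.le (by nlinarith [hω i, mul_nonneg (sub_nonneg.2 hα1) (hω i).1])
  have hsum : ∑ i ∈ range τ, β * (1 - α * ω i) = R := by rw [hR, mul_sum]
  have hM : 0 ≤ M := (h0 0 le_rfl).1.trans (h0 0 le_rfl).2
  simpa only [hsum] using
    hrec.le_pow_mul hweights (hsum ▸ hR1.le) hM fun t ht => (h0 t ht).2

/-- Geometric decay in the subcritical case. -/
theorem epidemic_recursion_geometric_decay
    (d τ : ℕ) (hτ : 1 ≤ τ) (β α : ℝ) (hβ : 0 < β)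
    (hα0 : 0 ≤ α) (hα1 : α ≤ 1)
    (ω : ℕ → ℝ) (hω : ∀ i, 0 ≤ ω i ∧ ω i ≤ 1)
    (R : ℝ) (hR : R = β * ∑ i ∈ Finset.range τ, (1 - α * ω i)) (hR1 : R < 1)
    (x : ℤ → ℝ)
    (hx : ∀ t : ℤ, 0 ≤ t →
      x (t + 1) = β * ∑ i ∈ Finset.range τ, (1 - α * ω i) * x (t - d - i))
    (M : ℝ) (hM : 0 ≤ M)
    (h0 : ∀ t : ℤ, t ≤ 0 → 0 ≤ x t ∧ x t ≤ M) :
    ∀ k : ℕ, ∀ t : ℤ, (↑(k * (d + τ)) : ℤ) < t → x t ≤ R ^ k * M :=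
  epidemic_recursion_geometric_decay_general d τ β α hβ hα1 ω hω R hR hR1 x hx M h0
end

section
/- Extinction in the subcritical case: let R = β · Σ_{i=0}^{τ-1} (1 − α·ω(i)) and suppose R < 1. If x : ℤ → ℝ satisfies the epidemic recursion from time 0 and there is a real M ≥ 0 with 0 ≤ x(t) ≤ M for every integer t ≤ 0, then x(t) tends to 0 as t → +∞. -/
/-!
With nonnegative weights the recursion is monotone, and `x (t + 1)` only sees the window
`[t - d - τ + 1, t]`, so a bound `B` on all values after some time turns into the bound `R * B`
`d + τ + 1` steps later. Starting from `M` on the history, `x t ≤ M * R ^ n` once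
`t ≥ n * (d + τ + 1)`, and `0 ≤ x t ≤ M * R ^ n` squeezes `x` to `0` when `R < 1`.
-/

open Filter Finset

def SatisfiesDelayRecursion (c : ℕ → ℝ) (d τ : ℕ) (x : ℤ → ℝ) : Prop :=
  ∀ t : ℤ, 0 ≤ t → x (t + 1) = ∑ i ∈ range τ, c i * x (t - d - i)

theorem Int.forall_of_forall_nonpos_of_step {P : ℤ → Prop} (h0 : ∀ t ≤ 0, P t)
    (hstep : ∀ t, 0 ≤ t → (∀ s ≤ t, P s) → P (t + 1)) (t : ℤ) : P t := by
  suffices h : ∀ n : ℕ, ∀ s ≤ (n : ℤ), P s from h t.toNat t (Int.self_le_toNat t)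
  intro n
  induction n with
  | zero => simpa using h0
  | succ n ih =>
    intro s hs
    rcases lt_or_eq_of_le hs with hlt | rfl
    · exact ih s (by omega)
    · exact_mod_cast hstep n n.cast_nonneg ih

namespace SatisfiesDelayRecursion

variable {c : ℕ → ℝ} {d τ : ℕ} {x : ℤ → ℝ}

theorem nonneg (hx : SatisfiesDelayRecursion c d τ x) (hc : ∀ i, 0 ≤ c i)
    (h0 : ∀ t ≤ 0, 0 ≤ x t) (t : ℤ) : 0 ≤ x t := by
  refine Int.forall_of_forall_nonpos_of_step h0 (fun s hs ih => ?_) t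
  rw [hx s hs]
  exact sum_nonneg fun i _ => mul_nonneg (hc i) (ih _ (by omega))

theorem le_sum_mul (hx : SatisfiesDelayRecursion c d τ x) (hc : ∀ i, 0 ≤ c i)
    {t : ℤ} (ht : 0 ≤ t) {B : ℝ} (hB : ∀ i < τ, x (t - d - i) ≤ B) :
    x (t + 1) ≤ (∑ i ∈ range τ, c i) * B := by
  rw [hx t ht, sum_mul]
  exact sum_le_sum fun i hi => mul_le_mul_of_nonneg_left (hB i (mem_range.1 hi)) (hc i)

theorem le_of_sum_le_one (hx : SatisfiesDelayRecursion c d τ x) (hc : ∀ i, 0 ≤ c i)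
    (hR : ∑ i ∈ range τ, c i ≤ 1) {M : ℝ} (hM : 0 ≤ M) (h0 : ∀ t ≤ 0, x t ≤ M) (t : ℤ) :
    x t ≤ M := by
  refine Int.forall_of_forall_nonpos_of_step h0 (fun s hs ih => ?_) t
  calc x (s + 1) ≤ (∑ i ∈ range τ, c i) * M := hx.le_sum_mul hc hs fun i _ => ih _ (by omega)
    _ ≤ 1 * M := mul_le_mul_of_nonneg_right hR hM
    _ = M := one_mul M

theorem le_mul_pow (hx : SatisfiesDelayRecursion c d τ x) (hc : ∀ i, 0 ≤ c i)
    (hR : ∑ i ∈ range τ, c i ≤ 1) {M : ℝ} (hM : 0 ≤ M) (h0 : ∀ t ≤ 0, x t ≤ M)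
    {L : ℕ} (hL : 0 < L) (hdτL : d + τ ≤ L) (n : ℕ) {t : ℤ} (ht : (n * L : ℕ) ≤ t) :
    x t ≤ M * (∑ i ∈ range τ, c i) ^ n := by
  induction n generalizing t with
  | zero => simpa using hx.le_of_sum_le_one hc hR hM h0 t
  | succ n ih =>
    obtain ⟨s, rfl⟩ : ∃ s, t = s + 1 := ⟨t - 1, by ring⟩
    have hnL : ((n * L : ℕ) : ℤ) + L ≤ s + 1 := by push_cast at ht ⊢; linarith
    calc x (s + 1) ≤ (∑ i ∈ range τ, c i) * (M * (∑ i ∈ range τ, c i) ^ n) :=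
          hx.le_sum_mul hc (by omega) fun i hi => ih (by omega)
      _ = M * (∑ i ∈ range τ, c i) ^ (n + 1) := by ring

theorem tendsto_zero_of_sum_lt_one (hx : SatisfiesDelayRecursion c d τ x) (hc : ∀ i, 0 ≤ c i)
    (hR : ∑ i ∈ range τ, c i < 1) {M : ℝ} (hM : 0 ≤ M) (h0 : ∀ t ≤ 0, 0 ≤ x t ∧ x t ≤ M) :
    Tendsto x atTop (nhds 0) := by
  set L := d + τ + 1 with hL
  have hpow : Tendsto (fun n : ℕ => M * (∑ i ∈ range τ, c i) ^ n) atTop (nhds 0) := by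
    simpa using (tendsto_pow_atTop_nhds_zero_of_lt_one (sum_nonneg fun i _ => hc i) hR).const_mul M
  have hwindows : Tendsto (fun t : ℤ => t.toNat / L) atTop atTop :=
    (Nat.tendsto_div_const_atTop (by omega)).comp
      (tendsto_atTop_atTop.2 fun n => ⟨n, fun t ht => by omega⟩)
  refine tendsto_of_tendsto_of_tendsto_of_le_of_le' tendsto_const_nhds (hpow.comp hwindows)
    (Eventually.of_forall (hx.nonneg hc fun t ht => (h0 t ht).1)) ?_
  filter_upwards [eventually_ge_atTop 0] with t ht
  refine hx.le_mul_pow hc hR.le hM (fun t ht => (h0 t ht).2) (L := L) (by omega) (by omega) _ ?_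
  calc ((t.toNat / L * L : ℕ) : ℤ) ≤ t.toNat := by exact_mod_cast Nat.div_mul_le_self t.toNat L
    _ = t := Int.toNat_of_nonneg ht

end SatisfiesDelayRecursion

theorem epidemic_recursion_extinction_general
    (d τ : ℕ) (β α : ℝ) (hβ : 0 < β)
    (hα0 : 0 ≤ α) (hα1 : α ≤ 1)
    (ω : ℕ → ℝ) (hω : ∀ i, 0 ≤ ω i ∧ ω i ≤ 1)
    (R : ℝ) (hR : R = β * ∑ i ∈ Finset.range τ, (1 - α * ω i)) (hR1 : R < 1)
    (x : ℤ → ℝ)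
    (hx : ∀ t : ℤ, 0 ≤ t →
      x (t + 1) = β * ∑ i ∈ Finset.range τ, (1 - α * ω i) * x (t - d - i))
    (M : ℝ) (hM : 0 ≤ M)
    (h0 : ∀ t : ℤ, t ≤ 0 → 0 ≤ x t ∧ x t ≤ M) :
    Filter.Tendsto x Filter.atTop (nhds 0) := by
  have hrec : SatisfiesDelayRecursion (fun i => β * (1 - α * ω i)) d τ x := fun t ht => by
    simp only [hx t ht, mul_sum, mul_assoc]
  have hc : ∀ i, 0 ≤ β * (1 - α * ω i) := fun i =>
    mul_nonneg hβ.le (by nlinarith [(hω i).2])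
  refine hrec.tendsto_zero_of_sum_lt_one hc ?_ hM h0
  rwa [← mul_sum, ← hR]

/-- Extinction in the subcritical case: if `R < 1` and the history is bounded in `[0, M]`,
then `x t → 0` as `t → +∞`. -/
theorem epidemic_recursion_extinction
    (d τ : ℕ) (hτ : 1 ≤ τ) (β α : ℝ) (hβ : 0 < β)
    (hα0 : 0 ≤ α) (hα1 : α ≤ 1)
    (ω : ℕ → ℝ) (hω : ∀ i, 0 ≤ ω i ∧ ω i ≤ 1)
    (R : ℝ) (hR : R = β * ∑ i ∈ Finset.range τ, (1 - α * ω i)) (hR1 : R < 1)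
    (x : ℤ → ℝ)
    (hx : ∀ t : ℤ, 0 ≤ t →
      x (t + 1) = β * ∑ i ∈ Finset.range τ, (1 - α * ω i) * x (t - d - i))
    (M : ℝ) (hM : 0 ≤ M)
    (h0 : ∀ t : ℤ, t ≤ 0 → 0 ≤ x t ∧ x t ≤ M) :
    Filter.Tendsto x Filter.atTop (nhds 0) :=
  epidemic_recursion_extinction_general d τ β α hβ hα0 hα1 ω hω R hR hR1 x hx M hM h0
end

section
/- Geometric growth in the supercritical case: let R = β · Σ_{i=0}^{τ-1} (1 − α·ω(i)) and suppose R > 1. If x : ℤ → ℝ satisfies the epidemic recursion from time 0 and there is a real m > 0 with x(t) ≥ m for every integer t ≤ 0, then for every natural number k and every integer t with t > k·(d + τ), one has x(t) ≥ R^k · m; in particular x(t) → +∞ as t → +∞. -/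
/-!
Writing `a i = β (1 - α ω i) ≥ 0`, the recursion says that `x (t + 1)` is a nonnegative combination
of the `τ` values `x (t - d - i)`, with total weight `R`. A lower bound `c` on those values therefore
gives `R c ≤ x (t + 1)`. Since `R ≥ 1`, the bound `m` on the initial history propagates forward in
time, and each further window of `d + τ` time steps multiplies the lower bound by `R`.
-/

open Finset Filter

def SatisfiesLagRecursion (a : ℕ → ℝ) (d τ : ℕ) (x : ℤ → ℝ) : Prop :=
  ∀ t : ℤ, 0 ≤ t → x (t + 1) = ∑ i ∈ range τ, a i * x (t - d - i)

namespace SatisfiesLagRecursion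

variable {a : ℕ → ℝ} {d τ : ℕ} {x : ℤ → ℝ}

theorem sum_mul_le (hx : SatisfiesLagRecursion a d τ x) (ha : ∀ i, 0 ≤ a i)
    {t : ℤ} (ht : 0 ≤ t) {c : ℝ} (hc : ∀ i < τ, c ≤ x (t - d - i)) :
    (∑ i ∈ range τ, a i) * c ≤ x (t + 1) := by
  rw [hx t ht, sum_mul]
  exact sum_le_sum fun i hi ↦ mul_le_mul_of_nonneg_left (hc i (mem_range.mp hi)) (ha i)

theorem le_of_forall_nonpos_le (hx : SatisfiesLagRecursion a d τ x) (ha : ∀ i, 0 ≤ a i)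
    (hR : 1 ≤ ∑ i ∈ range τ, a i) {m : ℝ} (hm : 0 ≤ m) (h0 : ∀ t ≤ 0, m ≤ x t) (t : ℤ) :
    m ≤ x t := by
  suffices ∀ n : ℕ, ∀ t ≤ (n : ℤ), m ≤ x t from this t.toNat t (Int.self_le_toNat t)
  intro n
  induction n with
  | zero => exact_mod_cast h0
  | succ n ih =>
    intro t ht
    rcases le_or_gt t n with htn | htn
    · exact ih t htn
    · obtain ⟨s, hs, rfl⟩ : ∃ s : ℤ, 0 ≤ s ∧ t = s + 1 := ⟨t - 1, by omega, by ring⟩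
      have hstep := hx.sum_mul_le ha hs (c := m) fun i _ ↦ ih _ (by omega)
      nlinarith

theorem pow_mul_le (hx : SatisfiesLagRecursion a d τ x) (ha : ∀ i, 0 ≤ a i)
    (hR : 1 ≤ ∑ i ∈ range τ, a i) {m : ℝ} (hm : 0 ≤ m) (h0 : ∀ t ≤ 0, m ≤ x t) (k : ℕ) {t : ℤ}
    (ht : ((k * (d + τ) : ℕ) : ℤ) < t) : (∑ i ∈ range τ, a i) ^ k * m ≤ x t := by
  induction k generalizing t with
  | zero => simpa using hx.le_of_forall_nonpos_le ha hR hm h0 t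
  | succ k ih =>
    push_cast at ht ih
    obtain ⟨s, hs, rfl⟩ : ∃ s : ℤ, 0 ≤ s ∧ t = s + 1 :=
      ⟨t - 1, by nlinarith, by ring⟩
    rw [pow_succ', mul_assoc]
    exact hx.sum_mul_le ha hs fun i hi ↦ ih (by nlinarith)

theorem tendsto_atTop (hx : SatisfiesLagRecursion a d τ x) (ha : ∀ i, 0 ≤ a i)
    (hR : 1 < ∑ i ∈ range τ, a i) {m : ℝ} (hm : 0 < m) (h0 : ∀ t ≤ 0, m ≤ x t) :
    Tendsto x atTop atTop := by
  refine Filter.tendsto_atTop.mpr fun b ↦ ?_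
  obtain ⟨k, hk⟩ :=
    (((tendsto_pow_atTop_atTop_of_one_lt hR).atTop_mul_const hm).eventually_ge_atTop b).exists
  filter_upwards [eventually_gt_atTop ((k * (d + τ) : ℕ) : ℤ)] with t ht
  exact hk.trans (hx.pow_mul_le ha hR.le hm.le h0 k ht)

end SatisfiesLagRecursion

theorem epidemic_recursion_geometric_growth_general
    (d τ : ℕ) (β α : ℝ) (hβ : 0 < β)
    (hα1 : α ≤ 1)
    (ω : ℕ → ℝ) (hω : ∀ i, 0 ≤ ω i ∧ ω i ≤ 1)
    (R : ℝ) (hR : R = β * ∑ i ∈ Finset.range τ, (1 - α * ω i)) (hR1 : 1 < R)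
    (x : ℤ → ℝ)
    (hx : ∀ t : ℤ, 0 ≤ t →
      x (t + 1) = β * ∑ i ∈ Finset.range τ, (1 - α * ω i) * x (t - d - i))
    (m : ℝ) (hm : 0 < m)
    (h0 : ∀ t : ℤ, t ≤ 0 → m ≤ x t) :
    (∀ k : ℕ, ∀ t : ℤ, (↑(k * (d + τ)) : ℤ) < t → R ^ k * m ≤ x t) ∧
      Filter.Tendsto x Filter.atTop Filter.atTop := by
  set a : ℕ → ℝ := fun i ↦ β * (1 - α * ω i)
  have ha : ∀ i, 0 ≤ a i := fun i ↦
    mul_nonneg hβ.le (sub_nonneg.mpr (mul_le_one₀ hα1 (hω i).1 (hω i).2))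
  have hRa : R = ∑ i ∈ range τ, a i := by rw [hR, mul_sum]
  have hrec : SatisfiesLagRecursion a d τ x := fun t ht ↦ by
    simp only [hx t ht, mul_sum, a, mul_assoc]
  subst hRa
  exact ⟨fun k _ ht ↦ hrec.pow_mul_le ha hR1.le hm.le h0 k ht, hrec.tendsto_atTop ha hR1 hm h0⟩

/-- Geometric growth in the supercritical case, and divergence to `+∞`. -/
theorem epidemic_recursion_geometric_growth
    (d τ : ℕ) (hτ : 1 ≤ τ) (β α : ℝ) (hβ : 0 < β)
    (hα0 : 0 ≤ α) (hα1 : α ≤ 1)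
    (ω : ℕ → ℝ) (hω : ∀ i, 0 ≤ ω i ∧ ω i ≤ 1)
    (R : ℝ) (hR : R = β * ∑ i ∈ Finset.range τ, (1 - α * ω i)) (hR1 : 1 < R)
    (x : ℤ → ℝ)
    (hx : ∀ t : ℤ, 0 ≤ t →
      x (t + 1) = β * ∑ i ∈ Finset.range τ, (1 - α * ω i) * x (t - d - i))
    (m : ℝ) (hm : 0 < m)
    (h0 : ∀ t : ℤ, t ≤ 0 → m ≤ x t) :
    (∀ k : ℕ, ∀ t : ℤ, (↑(k * (d + τ)) : ℤ) < t → R ^ k * m ≤ x t) ∧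
      Filter.Tendsto x Filter.atTop Filter.atTop :=
  epidemic_recursion_geometric_growth_general d τ β α hβ hα1 ω hω R hR hR1 x hx m hm h0
end

section
/- Threshold characterization of the characteristic root: let R = β · Σ_{i=0}^{τ-1} (1 − α·ω(i)) and suppose R > 0. Define f : (0, ∞) → ℝ by f(r) = β · Σ_{i=0}^{τ-1} (1 − α·ω(i)) · r^{−(d+1+i)}. Then f is strictly decreasing on (0, ∞) and there exists a unique r* > 0 with f(r*) = 1; moreover r* > 1 if and only if R > 1, r* = 1 if and only if R = 1, and r* < 1 if and only if R < 1. -/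
/-!
With nonnegative coefficients `cᵢ` and exponents `kᵢ ≥ 1`, each term `cᵢ r^{-kᵢ}` is
nonincreasing on `(0, ∞)` and some term is strictly decreasing, so the sum is strictly
decreasing. Comparing `r^{-kᵢ}` with `r⁻¹` gives `f r ≥ f 1 / r` for `r ≤ 1` and
`f r ≤ f 1 / r` for `r ≥ 1`, so `f` takes every positive value, and the root of `f r = 1`
lies on the same side of `1` as `f 1 = R`, by monotonicity.
-/

open Finset Set

namespace NegPowSum

variable {ι : Type*} (s : Finset ι) (c : ι → ℝ) (k : ι → ℕ)

noncomputable def negPowSum (r : ℝ) : ℝ := ∑ i ∈ s, c i * (r ^ k i)⁻¹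

@[simp]
lemma negPowSum_one : negPowSum s c k 1 = ∑ i ∈ s, c i := by
  simp [negPowSum]

lemma continuousOn_negPowSum : ContinuousOn (negPowSum s c k) (Ioi 0) :=
  continuousOn_finsetSum s fun i _ =>
    continuousOn_const.mul <| (continuousOn_pow (k i)).inv₀ fun _ hr => pow_ne_zero _ hr.ne'

variable {s c k} (hc : ∀ i ∈ s, 0 ≤ c i) (hk : ∀ i ∈ s, k i ≠ 0)
include hc hk

lemma strictAntiOn_negPowSum (hpos : 0 < ∑ i ∈ s, c i) :
    StrictAntiOn (negPowSum s c k) (Ioi 0) := by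
  obtain ⟨j, hj, hcj⟩ : ∃ j ∈ s, 0 < c j := by
    simpa using exists_lt_of_sum_lt (f := fun _ => 0) (by simpa using hpos)
  intro x (hx : 0 < x) y _ hxy
  refine sum_lt_sum (fun i hi => ?_) ⟨j, hj, ?_⟩
  · exact mul_le_mul_of_nonneg_left
      (inv_anti₀ (pow_pos hx _) (pow_le_pow_left₀ hx.le hxy.le _)) (hc i hi)
  · exact mul_lt_mul_of_pos_left
      (inv_strictAnti₀ (pow_pos hx _) (pow_lt_pow_left₀ hxy hx.le (hk j hj))) hcj

lemma sum_div_le_negPowSum {r : ℝ} (hr0 : 0 < r) (hr1 : r ≤ 1) :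
    (∑ i ∈ s, c i) / r ≤ negPowSum s c k r := by
  rw [sum_div]
  refine sum_le_sum fun i hi => ?_
  rw [div_eq_mul_inv]
  exact mul_le_mul_of_nonneg_left
    (inv_anti₀ (pow_pos hr0 _) (pow_le_of_le_one hr0.le hr1 (hk i hi))) (hc i hi)

lemma negPowSum_le_sum_div {r : ℝ} (hr1 : 1 ≤ r) :
    negPowSum s c k r ≤ (∑ i ∈ s, c i) / r := by
  rw [sum_div]
  refine sum_le_sum fun i hi => ?_
  rw [div_eq_mul_inv]
  exact mul_le_mul_of_nonneg_left
    (inv_anti₀ (by positivity) (le_self_pow₀ hr1 (hk i hi))) (hc i hi)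

lemma exists_negPowSum_eq (hpos : 0 < ∑ i ∈ s, c i) {y : ℝ} (hy : 0 < y) :
    ∃ r, 0 < r ∧ negPowSum s c k r = y := by
  set S := ∑ i ∈ s, c i
  have ha : 0 < min 1 (S / y) := lt_min one_pos (div_pos hpos hy)
  have hab : min 1 (S / y) ≤ max 1 (S / y) := min_le_max
  have hya : y ≤ negPowSum s c k (min 1 (S / y)) :=
    calc y = S / (S / y) := by field_simp
      _ ≤ S / min 1 (S / y) := div_le_div_of_nonneg_left hpos.le ha (min_le_right _ _)
      _ ≤ _ := sum_div_le_negPowSum hc hk ha (min_le_left _ _)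
  have hby : negPowSum s c k (max 1 (S / y)) ≤ y :=
    calc _ ≤ S / max 1 (S / y) := negPowSum_le_sum_div hc hk (le_max_left _ _)
      _ ≤ S / (S / y) := div_le_div_of_nonneg_left hpos.le (div_pos hpos hy) (le_max_right _ _)
      _ = y := by field_simp
  have hcont : ContinuousOn (negPowSum s c k) (Icc (min 1 (S / y)) (max 1 (S / y))) :=
    (continuousOn_negPowSum s c k).mono fun r hr => ha.trans_le hr.1
  obtain ⟨r, hr, hry⟩ := intermediate_value_Icc' hab hcont ⟨hby, hya⟩
  exact ⟨r, ha.trans_le hr.1, hry⟩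

end NegPowSum

open NegPowSum in
theorem characteristic_root_threshold_general
    (d τ : ℕ) (β α : ℝ) (hβ : 0 < β)
    (hα1 : α ≤ 1)
    (ω : ℕ → ℝ) (hω : ∀ i, 0 ≤ ω i ∧ ω i ≤ 1)
    (R : ℝ) (hR : R = β * ∑ i ∈ Finset.range τ, (1 - α * ω i)) (hRpos : 0 < R)
    (f : ℝ → ℝ)
    (hf : ∀ r : ℝ,
      f r = β * ∑ i ∈ Finset.range τ, (1 - α * ω i) * r ^ (-((d : ℤ) + 1 + (i : ℤ)))) :
    StrictAntiOn f (Set.Ioi (0 : ℝ)) ∧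
      (∃! r : ℝ, 0 < r ∧ f r = 1) ∧
      (∀ r : ℝ, 0 < r → f r = 1 →
        ((1 < r ↔ 1 < R) ∧ (r = 1 ↔ R = 1) ∧ (r < 1 ↔ R < 1))) := by
  set c : ℕ → ℝ := fun i => β * (1 - α * ω i)
  have hc : ∀ i ∈ range τ, 0 ≤ c i := fun i _ =>
    mul_nonneg hβ.le (sub_nonneg.2 (mul_le_one₀ hα1 (hω i).1 (hω i).2))
  have hk : ∀ i ∈ range τ, d + 1 + i ≠ 0 := fun _ _ => by omega
  have hfc : f = negPowSum (range τ) c (fun i => d + 1 + i) := by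
    ext r
    rw [hf, negPowSum, mul_sum]
    refine sum_congr rfl fun i _ => ?_
    rw [mul_assoc, show -((d : ℤ) + 1 + i) = -((d + 1 + i : ℕ) : ℤ) by push_cast; ring,
      zpow_neg, zpow_natCast]
  have hf1 : f 1 = R := by rw [hfc, negPowSum_one, ← mul_sum, hR]
  have hS : 0 < ∑ i ∈ range τ, c i := by rwa [← mul_sum, ← hR]
  have hanti : StrictAntiOn f (Set.Ioi 0) := hfc ▸ strictAntiOn_negPowSum hc hk hS
  obtain ⟨r, hr, hr1⟩ := hfc ▸ exists_negPowSum_eq hc hk hS one_pos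
  refine ⟨hanti, ⟨r, ⟨hr, hr1⟩, fun t ⟨ht, ht1⟩ => hanti.injOn ht hr (ht1.trans hr1.symm)⟩, ?_⟩
  intro r (hr : 0 < r) hr1
  have h1 : (1 : ℝ) ∈ Set.Ioi 0 := Set.mem_Ioi.2 one_pos
  exact ⟨by rw [← hanti.lt_iff_gt hr h1, hr1, hf1], by rw [← hanti.eq_iff_eq h1 hr, hr1, hf1],
    by rw [← hanti.lt_iff_gt h1 hr, hr1, hf1]⟩

/-- Threshold characterization of the characteristic root: the characteristic function
`f r = β * ∑_{i<τ} (1 - α ω i) r^{-(d+1+i)}` is strictly decreasing on `(0, ∞)`,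
has a unique root `r* > 0` of `f r* = 1`, and `r*` compares to `1` exactly as `R`
compares to `1`. -/
theorem characteristic_root_threshold
    (d τ : ℕ) (hτ : 1 ≤ τ) (β α : ℝ) (hβ : 0 < β)
    (hα0 : 0 ≤ α) (hα1 : α ≤ 1)
    (ω : ℕ → ℝ) (hω : ∀ i, 0 ≤ ω i ∧ ω i ≤ 1)
    (R : ℝ) (hR : R = β * ∑ i ∈ Finset.range τ, (1 - α * ω i)) (hRpos : 0 < R)
    (f : ℝ → ℝ)
    (hf : ∀ r : ℝ,
      f r = β * ∑ i ∈ Finset.range τ, (1 - α * ω i) * r ^ (-((d : ℤ) + 1 + (i : ℤ)))) :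
    StrictAntiOn f (Set.Ioi (0 : ℝ)) ∧
      (∃! r : ℝ, 0 < r ∧ f r = 1) ∧
      (∀ r : ℝ, 0 < r → f r = 1 →
        ((1 < r ↔ 1 < R) ∧ (r = 1 ↔ R = 1) ∧ (r < 1 ↔ R < 1))) :=
  characteristic_root_threshold_general d τ β α hβ hα1 ω hω R hR hRpos f hf
end

section
/- Comparison in the isolation-time control: let τ₁, τ₂ : ℕ → ℕ be control functions with 1 ≤ τ₁(t) ≤ τ₂(t) for every natural number t, and let x₁, x₂ : ℤ → ℝ satisfy, for every integer t ≥ 0 and j ∈ {1,2}, x_j(t+1) = β · Σ_{i=0}^{τ_j(t)-1} (1 − α·ω(i)) · x_j(t − d − i). If x₁(t) = x₂(t) and x₁(t) ≥ 0 for every integer t ≤ 0, then 0 ≤ x₁(t) ≤ x₂(t) for every integer t ≥ 0. -/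
/-! Strong induction on `t`: the recursion writes `x(t+1)` as a combination of past values with
the nonnegative weights `β (1 - α ω i)`, so nonnegativity and the order `x₁ ≤ x₂` propagate
from the initial history, and the longer window `τ₂ ≥ τ₁` only adds nonnegative terms. -/

open Finset

theorem Int.forall_of_forall_le_zero_of_step {P : ℤ → Prop} (base : ∀ t ≤ 0, P t)
    (step : ∀ n : ℕ, (∀ s ≤ (n : ℤ), P s) → P (n + 1)) : ∀ t, P t := by
  have upto : ∀ n : ℕ, ∀ s ≤ (n : ℤ), P s := by
    intro n
    induction n with
    | zero => exact base
    | succ n ih =>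
      intro s hs
      rcases Int.le_add_one_iff.mp (show s ≤ (n : ℤ) + 1 by exact_mod_cast hs) with hle | rfl
      · exact ih s hle
      · exact step n ih
  intro t
  exact upto t.toNat t (Int.self_le_toNat t)

theorem sum_range_mul_le_sum_range_mul {c y z : ℕ → ℝ} {m n : ℕ} (hmn : m ≤ n)
    (hc : ∀ i, 0 ≤ c i) (hy : ∀ i, 0 ≤ y i) (hyz : ∀ i, y i ≤ z i) :
    ∑ i ∈ range m, c i * y i ≤ ∑ i ∈ range n, c i * z i :=
  calc ∑ i ∈ range m, c i * y i
      ≤ ∑ i ∈ range m, c i * z i :=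
        sum_le_sum fun i _ => mul_le_mul_of_nonneg_left (hyz i) (hc i)
    _ ≤ ∑ i ∈ range n, c i * z i :=
        sum_le_sum_of_subset_of_nonneg (range_subset_range.mpr hmn)
          fun i _ _ => mul_nonneg (hc i) ((hy i).trans (hyz i))

theorem delayed_recursion_comparison (d : ℕ) {β : ℝ} (hβ : 0 ≤ β) {c : ℕ → ℝ}
    (hc : ∀ i, 0 ≤ c i) {τ₁ τ₂ : ℕ → ℕ} (hτ : ∀ t, τ₁ t ≤ τ₂ t) {x₁ x₂ : ℤ → ℝ}
    (hx₁ : ∀ t : ℤ, 0 ≤ t → x₁ (t + 1) = β * ∑ i ∈ range (τ₁ t.toNat), c i * x₁ (t - d - i))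
    (hx₂ : ∀ t : ℤ, 0 ≤ t → x₂ (t + 1) = β * ∑ i ∈ range (τ₂ t.toNat), c i * x₂ (t - d - i))
    (h0 : ∀ t : ℤ, t ≤ 0 → x₁ t = x₂ t ∧ 0 ≤ x₁ t) :
    ∀ t, 0 ≤ x₁ t ∧ x₁ t ≤ x₂ t := by
  refine Int.forall_of_forall_le_zero_of_step (fun t ht => ⟨(h0 t ht).2, (h0 t ht).1.le⟩) ?_
  intro n ih
  have past : ∀ i : ℕ, (n : ℤ) - d - i ≤ n := fun i => by omega
  rw [hx₁ n n.cast_nonneg, hx₂ n n.cast_nonneg, Int.toNat_natCast]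
  exact ⟨mul_nonneg hβ (sum_nonneg fun i _ => mul_nonneg (hc i) (ih _ (past i)).1),
    mul_le_mul_of_nonneg_left (sum_range_mul_le_sum_range_mul (hτ n) hc
      (fun i => (ih _ (past i)).1) (fun i => (ih _ (past i)).2)) hβ⟩

theorem controlled_epidemic_comparison_in_tau_general
    (d : ℕ) (β α : ℝ) (hβ : 0 < β)
    (hα1 : α ≤ 1)
    (ω : ℕ → ℝ) (hω : ∀ i, 0 ≤ ω i ∧ ω i ≤ 1)
    (τ₁ τ₂ : ℕ → ℕ) (hτ : ∀ t : ℕ, 1 ≤ τ₁ t ∧ τ₁ t ≤ τ₂ t)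
    (x₁ x₂ : ℤ → ℝ)
    (hx₁ : ∀ t : ℤ, 0 ≤ t →
      x₁ (t + 1) = β * ∑ i ∈ Finset.range (τ₁ t.toNat), (1 - α * ω i) * x₁ (t - d - i))
    (hx₂ : ∀ t : ℤ, 0 ≤ t →
      x₂ (t + 1) = β * ∑ i ∈ Finset.range (τ₂ t.toNat), (1 - α * ω i) * x₂ (t - d - i))
    (h0 : ∀ t : ℤ, t ≤ 0 → x₁ t = x₂ t ∧ 0 ≤ x₁ t) :
    ∀ t : ℤ, 0 ≤ t → 0 ≤ x₁ t ∧ x₁ t ≤ x₂ t := by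
  have survival_nonneg : ∀ i, 0 ≤ 1 - α * ω i := fun i => by
    nlinarith [mul_le_mul_of_nonneg_right hα1 (hω i).1, (hω i).2]
  exact fun t _ => delayed_recursion_comparison d hβ.le survival_nonneg
    (fun t => (hτ t).2) hx₁ hx₂ h0 t

/-- Comparison in the isolation-time control: a pointwise larger control `τ₂ ≥ τ₁`
yields a pointwise larger (nonnegative) solution. -/
theorem controlled_epidemic_comparison_in_tau
    (d : ℕ) (β α : ℝ) (hβ : 0 < β)
    (hα0 : 0 ≤ α) (hα1 : α ≤ 1)
    (ω : ℕ → ℝ) (hω : ∀ i, 0 ≤ ω i ∧ ω i ≤ 1)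
    (τ₁ τ₂ : ℕ → ℕ) (hτ : ∀ t : ℕ, 1 ≤ τ₁ t ∧ τ₁ t ≤ τ₂ t)
    (x₁ x₂ : ℤ → ℝ)
    (hx₁ : ∀ t : ℤ, 0 ≤ t →
      x₁ (t + 1) = β * ∑ i ∈ Finset.range (τ₁ t.toNat), (1 - α * ω i) * x₁ (t - d - i))
    (hx₂ : ∀ t : ℤ, 0 ≤ t →
      x₂ (t + 1) = β * ∑ i ∈ Finset.range (τ₂ t.toNat), (1 - α * ω i) * x₂ (t - d - i))
    (h0 : ∀ t : ℤ, t ≤ 0 → x₁ t = x₂ t ∧ 0 ≤ x₁ t) :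
    ∀ t : ℤ, 0 ≤ t → 0 ≤ x₁ t ∧ x₁ t ≤ x₂ t :=
  controlled_epidemic_comparison_in_tau_general d β α hβ hα1 ω hω τ₁ τ₂ hτ x₁ x₂ hx₁ hx₂ h0
end

section
/- Comparison in the time-dependent control implies a bound on active infectious population: let τ : ℕ → ℕ be a control with 1 ≤ τ(t) ≤ τ_max for all t, let x : ℤ → ℝ satisfy the controlled epidemic recursion with control τ and nonnegative history, and let y : ℤ → ℝ satisfy the controlled epidemic recursion with the constant control τ_max and the same history. Then for every integer t ≥ 0 the active infectious populations satisfy 0 ≤ Σ_{i=0}^{τ(t)-1} (1 − α·ω(i)) · x(t − d − i) ≤ Σ_{i=0}^{τ_max-1} (1 − α·ω(i)) · y(t − d − i). -/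
/-!
Both populations stay nonnegative and `x ≤ y` holds pointwise, by strong induction on time:
the weights `1 - α ω i` are nonnegative, so each new value `β · I_a(t)` is a nonnegative
combination of earlier values, and enlarging the window from `τ t` to `τmax` only adds
nonnegative terms of `y`.
-/

open Finset

theorem Int.forall_of_nonpos_of_strong_step {P : ℤ → Prop} (base : ∀ t ≤ 0, P t)
    (step : ∀ t : ℤ, 0 ≤ t → (∀ s ≤ t, P s) → P (t + 1)) (t : ℤ) : P t := by
  suffices h : ∀ n : ℕ, ∀ s ≤ (n : ℤ), P s from h t.toNat t (Int.self_le_toNat t)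
  intro n
  induction n with
  | zero => exact base
  | succ n ih =>
    intro s hs
    rcases le_or_gt s n with hsn | hsn
    · exact ih s hsn
    · obtain rfl : s = n + 1 := by omega
      exact step n (Int.natCast_nonneg n) ih

theorem one_sub_mul_nonneg_of_le_one {a w : ℝ} (ha : a ≤ 1) (hw₀ : 0 ≤ w) (hw₁ : w ≤ 1) :
    0 ≤ 1 - a * w := by
  have : a * w ≤ 1 * 1 := mul_le_mul ha hw₁ hw₀ zero_le_one
  linarith

namespace Epidemic

/-- The paper's `I_a(t)`, with weights `c i = 1 - α ω i` and window `n = τ t`. -/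
def activePopulation (c : ℕ → ℝ) (d n : ℕ) (x : ℤ → ℝ) (t : ℤ) : ℝ :=
  ∑ i ∈ range n, c i * x (t - d - i)

variable {c : ℕ → ℝ} {d : ℕ} {x y : ℤ → ℝ} {t : ℤ}

theorem activePopulation_nonneg {n : ℕ} (hc : ∀ i, 0 ≤ c i) (hx : ∀ s ≤ t, 0 ≤ x s) :
    0 ≤ activePopulation c d n x t :=
  sum_nonneg fun i _ => mul_nonneg (hc i) (hx _ (by omega))

theorem activePopulation_le_of_le {m n : ℕ} (hc : ∀ i, 0 ≤ c i) (hmn : m ≤ n)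
    (hx : ∀ s ≤ t, 0 ≤ x s) (hxy : ∀ s ≤ t, x s ≤ y s) :
    activePopulation c d m x t ≤ activePopulation c d n y t :=
  calc activePopulation c d m x t ≤ activePopulation c d m y t :=
        sum_le_sum fun i _ => mul_le_mul_of_nonneg_left (hxy _ (by omega)) (hc i)
    _ ≤ activePopulation c d n y t :=
        sum_le_sum_of_subset_of_nonneg (range_subset_range.2 hmn) fun i _ _ =>
          mul_nonneg (hc i) ((hx _ (by omega)).trans (hxy _ (by omega)))

theorem nonneg_and_le_of_control_le {β : ℝ} {σ τ : ℕ → ℕ} (hc : ∀ i, 0 ≤ c i) (hβ : 0 ≤ β)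
    (hστ : ∀ t, σ t ≤ τ t)
    (hx : ∀ t : ℤ, 0 ≤ t → x (t + 1) = β * activePopulation c d (σ t.toNat) x t)
    (hy : ∀ t : ℤ, 0 ≤ t → y (t + 1) = β * activePopulation c d (τ t.toNat) y t)
    (h0 : ∀ t : ℤ, t ≤ 0 → x t = y t ∧ 0 ≤ x t) (s : ℤ) :
    0 ≤ x s ∧ x s ≤ y s := by
  refine Int.forall_of_nonpos_of_strong_step (P := fun s => 0 ≤ x s ∧ x s ≤ y s)
    (fun t ht => ⟨(h0 t ht).2, (h0 t ht).1.le⟩) (fun t ht ih => ?_) s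
  have hx₀ : ∀ s ≤ t, 0 ≤ x s := fun s hs => (ih s hs).1
  have hxy : ∀ s ≤ t, x s ≤ y s := fun s hs => (ih s hs).2
  rw [hx t ht, hy t ht]
  exact ⟨mul_nonneg hβ (activePopulation_nonneg hc hx₀),
    mul_le_mul_of_nonneg_left (activePopulation_le_of_le hc (hστ _) hx₀ hxy) hβ⟩

end Epidemic

open Epidemic in
theorem controlled_epidemic_active_population_bound_general
    (d : ℕ) (β α : ℝ) (hβ : 0 < β)
    (hα1 : α ≤ 1)
    (ω : ℕ → ℝ) (hω : ∀ i, 0 ≤ ω i ∧ ω i ≤ 1)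
    (τ : ℕ → ℕ) (τmax : ℕ) (hτ : ∀ t : ℕ, 1 ≤ τ t ∧ τ t ≤ τmax)
    (x y : ℤ → ℝ)
    (hx : ∀ t : ℤ, 0 ≤ t →
      x (t + 1) = β * ∑ i ∈ Finset.range (τ t.toNat), (1 - α * ω i) * x (t - d - i))
    (hy : ∀ t : ℤ, 0 ≤ t →
      y (t + 1) = β * ∑ i ∈ Finset.range τmax, (1 - α * ω i) * y (t - d - i))
    (h0 : ∀ t : ℤ, t ≤ 0 → x t = y t ∧ 0 ≤ x t) :
    ∀ t : ℤ, 0 ≤ t →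
      0 ≤ ∑ i ∈ Finset.range (τ t.toNat), (1 - α * ω i) * x (t - d - i) ∧
      ∑ i ∈ Finset.range (τ t.toNat), (1 - α * ω i) * x (t - d - i) ≤
        ∑ i ∈ Finset.range τmax, (1 - α * ω i) * y (t - d - i) := by
  have hc : ∀ i, 0 ≤ 1 - α * ω i := fun i => one_sub_mul_nonneg_of_le_one hα1 (hω i).1 (hω i).2
  have hxy := nonneg_and_le_of_control_le (σ := τ) (τ := fun _ => τmax) hc hβ.le
    (fun t => (hτ t).2) hx hy h0
  rintro t -
  exact ⟨activePopulation_nonneg hc fun s _ => (hxy s).1,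
    activePopulation_le_of_le hc (hτ t.toNat).2 (fun s _ => (hxy s).1) fun s _ => (hxy s).2⟩

/-- Comparison in the time-dependent control implies a bound on the active
infectious population. -/
theorem controlled_epidemic_active_population_bound
    (d : ℕ) (β α : ℝ) (hβ : 0 < β)
    (hα0 : 0 ≤ α) (hα1 : α ≤ 1)
    (ω : ℕ → ℝ) (hω : ∀ i, 0 ≤ ω i ∧ ω i ≤ 1)
    (τ : ℕ → ℕ) (τmax : ℕ) (hτ : ∀ t : ℕ, 1 ≤ τ t ∧ τ t ≤ τmax)
    (x y : ℤ → ℝ)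
    (hx : ∀ t : ℤ, 0 ≤ t →
      x (t + 1) = β * ∑ i ∈ Finset.range (τ t.toNat), (1 - α * ω i) * x (t - d - i))
    (hy : ∀ t : ℤ, 0 ≤ t →
      y (t + 1) = β * ∑ i ∈ Finset.range τmax, (1 - α * ω i) * y (t - d - i))
    (h0 : ∀ t : ℤ, t ≤ 0 → x t = y t ∧ 0 ≤ x t) :
    ∀ t : ℤ, 0 ≤ t →
      0 ≤ ∑ i ∈ Finset.range (τ t.toNat), (1 - α * ω i) * x (t - d - i) ∧
      ∑ i ∈ Finset.range (τ t.toNat), (1 - α * ω i) * x (t - d - i) ≤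
        ∑ i ∈ Finset.range τmax, (1 - α * ω i) * y (t - d - i) :=
  controlled_epidemic_active_population_bound_general d β α hβ hα1 ω hω τ τmax hτ x y hx hy h0
end
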